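/- Let κ_nrm > 0, σ0 ∈ (0,1], θ > 1, η ∈ (0,1] and κ_c > 0, and suppose ρ ≥ (κ_c·θ·L_λ + (1/2)κ_c·θ²·L_L + κ_c·θ²·L_λ·L_c + η)/(κ_nrm·σ0²). Let x ∈ ℝⁿ with ‖c(x)‖ ≤ κ_c, and let s ∈ ℝⁿ satisfy ⟨g_T(x), s⟩ = 0 (as holds when s lies in the range of J(x)ᵀ), ‖s‖ ≤ θ‖c(x)‖, and ‖c(x + s)‖ − ‖c(x)‖ ≤ −κ_nrm·σ0²·‖c(x)‖. Then ψ(x + s) − ψ(x) ≤ −η·‖c(x)‖. -/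

import Mathlib

/-!
Split `ψ(x + s) - ψ(x)` into the change of the Lagrangian `f + ⟪λ̂(x), c⟫` with the multiplier
frozen at `x`, the multiplier change `⟪λ̂(x + s) - λ̂(x), c(x + s)⟫`, and the penalty change
`ρ (‖c(x + s)‖ - ‖c(x)‖)`. The gradient of the frozen Lagrangian at `x` is `g_T(x)`, orthogonal
to `s`, so the descent lemma bounds the first term by `(L_L / 2) ‖s‖²`; the second is at most
`L_λ ‖s‖ (‖c(x)‖ + L_c ‖s‖)`. Since `‖s‖ ≤ θ ‖c(x)‖` and `‖c(x)‖ ≤ κ_c`, both are linear in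
`‖c(x)‖`, and the choice of `ρ` makes the penalty decrease dominate them by `η ‖c(x)‖`.
-/

open InnerProductSpace RealInnerProductSpace

lemma nonneg_of_norm_le_mul_norm {E F : Type*} [NormedAddGroup E] [SeminormedAddGroup F]
    {u : F} {v : E} {L : ℝ} (h : ‖u‖ ≤ L * ‖v‖) (hv : v ≠ 0) : 0 ≤ L :=
  nonneg_of_mul_nonneg_left ((norm_nonneg u).trans h) (norm_pos_iff.2 hv)

section

variable {E F : Type*} [NormedAddCommGroup E] [InnerProductSpace ℝ E] [CompleteSpace E]
  [NormedAddCommGroup F] [InnerProductSpace ℝ F] [CompleteSpace F]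

lemma HasGradientAt.add_inner_comp {f : E → ℝ} {c : E → F} {g y : E} {J : E →L[ℝ] F}
    (hf : HasGradientAt f g y) (hc : HasFDerivAt c J y) (μ : F) :
    HasGradientAt (fun w => f w + ⟪μ, c w⟫) (g + ContinuousLinearMap.adjoint J μ) y := by
  refine (hf.hasFDerivAt.add ((innerSL ℝ μ).hasFDerivAt.comp y hc)).congr_fderiv ?_
  ext v
  simp [ContinuousLinearMap.adjoint_inner_left]

lemma HasGradientAt.hasDerivAt_comp_add_smul {φ : E → ℝ} {G : E} {x s : E} {t : ℝ}
    (hφ : HasGradientAt φ G (x + t • s)) :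
    HasDerivAt (fun u : ℝ => φ (x + u • s)) ⟪G, s⟫ t := by
  have hline : HasDerivAt (fun u : ℝ => x + u • s) s t := by
    simpa using ((hasDerivAt_id t).smul_const s).const_add x
  have h := hφ.hasFDerivAt.comp_hasDerivAt t hline
  rw [toDual_apply_apply] at h
  exact h

lemma image_add_le_of_gradient_lipschitz {φ : E → ℝ} {G : E → E} {L : ℝ}
    (hφ : ∀ y, HasGradientAt φ (G y) y) (hG : ∀ y z, ‖G y - G z‖ ≤ L * ‖y - z‖) (x s : E) :
    φ (x + s) ≤ φ x + ⟪G x, s⟫ + L / 2 * ‖s‖ ^ 2 := by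
  set k : ℝ → ℝ := fun t => φ (x + t • s) - t * ⟪G x, s⟫ - L / 2 * ‖s‖ ^ 2 * t ^ 2
  have hk : ∀ t, HasDerivAt k (⟪G (x + t • s) - G x, s⟫ - L * ‖s‖ ^ 2 * t) t := by
    intro t
    refine (((hφ (x + t • s)).hasDerivAt_comp_add_smul.sub
      ((hasDerivAt_id t).mul_const ⟪G x, s⟫)).sub
      ((hasDerivAt_pow 2 t).const_mul (L / 2 * ‖s‖ ^ 2))).congr_deriv ?_
    rw [inner_sub_left]
    push_cast
    ring
  have hanti : AntitoneOn k (Set.Icc 0 1) := by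
    refine antitoneOn_of_deriv_nonpos (convex_Icc 0 1)
      (fun t _ => (hk t).continuousAt.continuousWithinAt)
      (fun t _ => (hk t).differentiableAt.differentiableWithinAt) fun t ht => ?_
    rw [interior_Icc] at ht
    have hGt : ‖G (x + t • s) - G x‖ ≤ L * (t * ‖s‖) := by
      simpa [norm_smul, abs_of_pos ht.1] using hG (x + t • s) x
    rw [(hk t).deriv, sub_nonpos]
    calc ⟪G (x + t • s) - G x, s⟫ ≤ ‖G (x + t • s) - G x‖ * ‖s‖ := real_inner_le_norm _ _
      _ ≤ L * (t * ‖s‖) * ‖s‖ := by gcongr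
      _ = L * ‖s‖ ^ 2 * t := by ring
  have := hanti (Set.left_mem_Icc.2 zero_le_one) (Set.right_mem_Icc.2 zero_le_one) zero_le_one
  simp only [k, zero_smul, add_zero, one_smul] at this
  linarith

end

lemma inner_sub_le_of_lipschitz {E F : Type*} [SeminormedAddCommGroup E] [NormedAddCommGroup F]
    [InnerProductSpace ℝ F] {lam c : E → F} {Llam Lc : ℝ}
    (hlam : ∀ y z, ‖lam y - lam z‖ ≤ Llam * ‖y - z‖) (hc : ∀ y z, ‖c y - c z‖ ≤ Lc * ‖y - z‖)
    (x y : E) : ⟪lam y - lam x, c y⟫ ≤ Llam * ‖y - x‖ * (‖c x‖ + Lc * ‖y - x‖) := by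
  have hcy : ‖c y‖ ≤ ‖c x‖ + Lc * ‖y - x‖ :=
    (norm_le_norm_add_norm_sub' _ _).trans (add_le_add_right (hc y x) _)
  exact (real_inner_le_norm _ _).trans
    (mul_le_mul (hlam y x) hcy (norm_nonneg _) ((norm_nonneg _).trans (hlam y x)))

lemma normal_step_error_le {r ν θ κ Lc Llam LL : ℝ} (hr : 0 ≤ r) (hrν : r ≤ θ * ν)
    (hν : 0 ≤ ν) (hνκ : ν ≤ κ) (hLc : 0 ≤ Lc) (hLlam : 0 ≤ Llam) (hLL : 0 ≤ LL) :
    LL / 2 * r ^ 2 + Llam * r * (ν + Lc * r) ≤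
      (κ * θ * Llam + 1 / 2 * κ * θ ^ 2 * LL + κ * θ ^ 2 * Llam * Lc) * ν := by
  have hθν : 0 ≤ θ * ν := hr.trans hrν
  have hr2 : r ^ 2 ≤ κ * θ ^ 2 * ν := by
    calc r ^ 2 ≤ (θ * ν) ^ 2 := by gcongr
      _ = θ ^ 2 * ν * ν := by ring
      _ ≤ θ ^ 2 * ν * κ := by gcongr
      _ = κ * θ ^ 2 * ν := by ring
  have hrν' : r * ν ≤ κ * θ * ν := by
    calc r * ν ≤ θ * ν * ν := by gcongr
      _ ≤ θ * ν * κ := by gcongr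
      _ = κ * θ * ν := by ring
  have h1 := mul_le_mul_of_nonneg_left hr2 hLL
  have h2 := mul_le_mul_of_nonneg_left hrν' hLlam
  have h3 := mul_le_mul_of_nonneg_left hr2 (mul_nonneg hLlam hLc)
  linarith

theorem normal_step_lyapunov_decrease_general
    (n m : ℕ)
    (f : EuclideanSpace ℝ (Fin n) → ℝ)
    (c : EuclideanSpace ℝ (Fin n) → EuclideanSpace ℝ (Fin m))
    (J : EuclideanSpace ℝ (Fin n) → (EuclideanSpace ℝ (Fin n) →L[ℝ] EuclideanSpace ℝ (Fin m)))
    (g gT : EuclideanSpace ℝ (Fin n) → EuclideanSpace ℝ (Fin n))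
    (lam : EuclideanSpace ℝ (Fin n) → EuclideanSpace ℝ (Fin m))
    (ψ : EuclideanSpace ℝ (Fin n) → ℝ)
    (ρ Lc Llam LL : ℝ)
    -- differentiability: `g` is the gradient of `f` and `J` the Jacobian of `c`
    (hf : ∀ y, HasGradientAt f (g y) y)
    (hcdiff : ∀ y, HasFDerivAt c (J y) y)
    -- least-squares multiplier and projected gradient
    (hgT : ∀ y, gT y = g y + (ContinuousLinearMap.adjoint (J y)) (lam y))
    -- Lyapunov function
    (hψ : ∀ y, ψ y = f y + (inner ℝ (lam y) (c y) : ℝ) + ρ * ‖c y‖)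
    -- Lipschitz hypotheses
    (hclip : ∀ y z, ‖c y - c z‖ ≤ Lc * ‖y - z‖)
    (hlamlip : ∀ y z, ‖lam y - lam z‖ ≤ Llam * ‖y - z‖)
    (hLlip : ∀ (μ : EuclideanSpace ℝ (Fin m)) (y z : EuclideanSpace ℝ (Fin n)),
      ‖(g y + (ContinuousLinearMap.adjoint (J y)) μ) -
          (g z + (ContinuousLinearMap.adjoint (J z)) μ)‖ ≤ LL * ‖y - z‖)
    -- constants and the penalty parameter
    (κnrm σ0 θ η κc : ℝ)
    (hκnrm : 0 < κnrm) (hσ0 : σ0 ∈ Set.Ioc (0 : ℝ) 1)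
    (hη : η ∈ Set.Ioc (0 : ℝ) 1)
    (hρ : (κc * θ * Llam + (1 / 2) * κc * θ ^ 2 * LL + κc * θ ^ 2 * Llam * Lc + η) /
        (κnrm * σ0 ^ 2) ≤ ρ)
    -- the normal step
    (x s : EuclideanSpace ℝ (Fin n))
    (hcx : ‖c x‖ ≤ κc)
    (hperp : (inner ℝ (gT x) s : ℝ) = 0)
    (hsbound : ‖s‖ ≤ θ * ‖c x‖)
    (hdecrease : ‖c (x + s)‖ - ‖c x‖ ≤ -(κnrm * σ0 ^ 2 * ‖c x‖)) :
    ψ (x + s) - ψ x ≤ -(η * ‖c x‖) := by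
  have hκσ : 0 < κnrm * σ0 ^ 2 := by have := hσ0.1; positivity
  have hν := norm_nonneg (c x)
  rcases eq_or_ne s 0 with rfl | hs
  · have hc0 : ‖c x‖ = 0 := by
      rw [add_zero, sub_self] at hdecrease
      nlinarith
    simp [hc0]
  have hs' : x + s - x ≠ 0 := by rwa [add_sub_cancel_left]
  have hLc := nonneg_of_norm_le_mul_norm (hclip (x + s) x) hs'
  have hLlam := nonneg_of_norm_le_mul_norm (hlamlip (x + s) x) hs'
  have hLL := nonneg_of_norm_le_mul_norm (hLlip 0 (x + s) x) hs'
  have hθ : 0 ≤ θ := by nlinarith [norm_pos_iff.2 hs]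
  have hκc : 0 ≤ κc := hν.trans hcx
  have hρ0 : 0 ≤ ρ := (div_nonneg (by have := hη.1; positivity) hκσ.le).trans hρ
  have hlag : f (x + s) + ⟪lam x, c (x + s)⟫ ≤ f x + ⟪lam x, c x⟫ + LL / 2 * ‖s‖ ^ 2 := by
    have := image_add_le_of_gradient_lipschitz
      (fun y => (hf y).add_inner_comp (hcdiff y) (lam x)) (hLlip (lam x)) x s
    rwa [← hgT, hperp, add_zero] at this
  have hmult := inner_sub_le_of_lipschitz hlamlip hclip x (x + s)
  rw [add_sub_cancel_left] at hmult
  have herr := normal_step_error_le (norm_nonneg s) hsbound hν hcx hLc hLlam hLL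
  have hpen := mul_le_mul_of_nonneg_left hdecrease hρ0
  have hρκσ := mul_le_mul_of_nonneg_right ((div_le_iff₀ hκσ).mp hρ) hν
  calc ψ (x + s) - ψ x
      = (f (x + s) + ⟪lam x, c (x + s)⟫ - (f x + ⟪lam x, c x⟫))
        + ⟪lam (x + s) - lam x, c (x + s)⟫ + ρ * (‖c (x + s)‖ - ‖c x‖) := by
        rw [hψ, hψ, inner_sub_left]
        ring
    _ ≤ (κc * θ * Llam + 1 / 2 * κc * θ ^ 2 * LL + κc * θ ^ 2 * Llam * Lc) * ‖c x‖
        - ρ * (κnrm * σ0 ^ 2) * ‖c x‖ := by linarith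
    _ ≤ -(η * ‖c x‖) := by linarith

/-- Lyapunov decrease along a normal step of the ADSWITCH algorithm: if the
penalty parameter satisfies
`ρ ≥ (κ_c θ L_λ + (1/2)κ_c θ² L_L + κ_c θ² L_λ L_c + η)/(κ_nrm σ0²)`,
`‖c(x)‖ ≤ κ_c`, and the step `s` satisfies `⟨g_T(x), s⟩ = 0`,
`‖s‖ ≤ θ‖c(x)‖` and `‖c(x+s)‖ − ‖c(x)‖ ≤ −κ_nrm σ0² ‖c(x)‖`, then
`ψ(x+s) − ψ(x) ≤ −η‖c(x)‖`, where `ψ(x) = f(x) + λ̂(x)ᵀc(x) + ρ‖c(x)‖`. -/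
theorem normal_step_lyapunov_decrease
    (n m : ℕ) (hmn : m ≤ n)
    (f : EuclideanSpace ℝ (Fin n) → ℝ)
    (c : EuclideanSpace ℝ (Fin n) → EuclideanSpace ℝ (Fin m))
    (J : EuclideanSpace ℝ (Fin n) → (EuclideanSpace ℝ (Fin n) →L[ℝ] EuclideanSpace ℝ (Fin m)))
    (g gT : EuclideanSpace ℝ (Fin n) → EuclideanSpace ℝ (Fin n))
    (lam : EuclideanSpace ℝ (Fin n) → EuclideanSpace ℝ (Fin m))
    (ψ : EuclideanSpace ℝ (Fin n) → ℝ)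
    (ρ Lc Llam LL : ℝ)
    -- differentiability: `g` is the gradient of `f` and `J` the Jacobian of `c`
    (hf : ∀ y, HasGradientAt f (g y) y)
    (hcdiff : ∀ y, HasFDerivAt c (J y) y)
    -- `J` has full row rank everywhere
    (hrank : ∀ y, Function.Surjective (J y))
    -- least-squares multiplier and projected gradient
    (hlam : ∀ y, (J y) ((ContinuousLinearMap.adjoint (J y)) (lam y)) = -((J y) (g y)))
    (hgT : ∀ y, gT y = g y + (ContinuousLinearMap.adjoint (J y)) (lam y))
    -- Lyapunov function
    (hψ : ∀ y, ψ y = f y + (inner ℝ (lam y) (c y) : ℝ) + ρ * ‖c y‖)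
    -- Lipschitz hypotheses
    (hclip : ∀ y z, ‖c y - c z‖ ≤ Lc * ‖y - z‖)
    (hctay : ∀ y z, ‖c z - c y - (J y) (z - y)‖ ≤ (Lc / 2) * ‖z - y‖ ^ 2)
    (hlamlip : ∀ y z, ‖lam y - lam z‖ ≤ Llam * ‖y - z‖)
    (hLlip : ∀ (μ : EuclideanSpace ℝ (Fin m)) (y z : EuclideanSpace ℝ (Fin n)),
      ‖(g y + (ContinuousLinearMap.adjoint (J y)) μ) -
          (g z + (ContinuousLinearMap.adjoint (J z)) μ)‖ ≤ LL * ‖y - z‖)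
    -- constants and the penalty parameter
    (κnrm σ0 θ η κc : ℝ)
    (hκnrm : 0 < κnrm) (hσ0 : σ0 ∈ Set.Ioc (0 : ℝ) 1) (hθ : 1 < θ)
    (hη : η ∈ Set.Ioc (0 : ℝ) 1) (hκc : 0 < κc)
    (hρ : (κc * θ * Llam + (1 / 2) * κc * θ ^ 2 * LL + κc * θ ^ 2 * Llam * Lc + η) /
        (κnrm * σ0 ^ 2) ≤ ρ)
    -- the normal step
    (x s : EuclideanSpace ℝ (Fin n))
    (hcx : ‖c x‖ ≤ κc)
    (hperp : (inner ℝ (gT x) s : ℝ) = 0)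
    (hsbound : ‖s‖ ≤ θ * ‖c x‖)
    (hdecrease : ‖c (x + s)‖ - ‖c x‖ ≤ -(κnrm * σ0 ^ 2 * ‖c x‖)) :
    ψ (x + s) - ψ x ≤ -(η * ‖c x‖) :=
  normal_step_lyapunov_decrease_general n m f c J g gT lam ψ ρ Lc Llam LL hf hcdiff hgT hψ hclip
    hlamlip hLlip κnrm σ0 θ η κc hκnrm hσ0 hη hρ x s hcx hperp hsbound hdecrease
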